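/- Let d ≥ 1 be an integer and q ≥ 0 a real number, and let f : ℝ × ℝ^d → ℂ be continuously differentiable on (ℝ × ℝ^d) ∖ {0} and positively homogeneous of degree −q, i.e., f(λ·x) = λ^{−q}·f(x) for every λ > 0 and every x ≠ 0. Set M = sup{ ‖Df(x)‖ : ‖x‖ = 1 }, where Df denotes the (Fréchet) derivative of f. Then there exists a constant C, depending only on q, such that for all t ∈ [0,1], all n, m ∈ ℤ, all real R ≥ 1, and all w ∈ ℝ^d with ‖w‖ = R: |f(t + n + m, w) − f(t + n, w)| ≤ C·M·(1 + m²)^{(q+2)/2}·(n² + R²)^{−(q+1)/2}. -/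

import Mathlib

/-!
Differentiating `f (l • x) = l ^ a • f x` shows that `Df` is homogeneous of degree `a - 1`, so
`‖Df x‖ ≤ M ‖x‖ ^ (-q - 1)`. On the segment from `(t + n, w)` to `(t + n + m, w)` every point
`(s, w)` has `|s - n| ≤ 1 + |m|`, so Peetre's inequality gives `n² + R² ≤ 6 (1 + m²) (s² + R²)`.
The mean value theorem then bounds the difference by
`M (6 (1 + m²) / (n² + R²)) ^ ((q + 1) / 2) · |m|`.
-/

noncomputable section

/-- `ℝ × ℝ^d` with the Euclidean norm `‖(t, w)‖ = (t² + ‖w‖²)^{1/2}`. -/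
abbrev EucProd (d : ℕ) : Type := WithLp 2 (ℝ × EuclideanSpace ℝ (Fin d))

/-- The pair `(t, w)` viewed as an element of `ℝ × ℝ^d` with the Euclidean norm. -/
def pt {d : ℕ} (t : ℝ) (w : EuclideanSpace ℝ (Fin d)) : EucProd d :=
  (WithLp.equiv 2 (ℝ × EuclideanSpace ℝ (Fin d))).symm (t, w)

open Topology

def IsPosHomogeneous {E F : Type*} [Zero E] [SMul ℝ E] [SMul ℝ F] (f : E → F) (a : ℝ) : Prop :=
  ∀ l : ℝ, 0 < l → ∀ x : E, x ≠ 0 → f (l • x) = l ^ a • f x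

namespace IsPosHomogeneous

variable {E F : Type*} [NormedAddCommGroup E] [NormedSpace ℝ E]
  [NormedAddCommGroup F] [NormedSpace ℝ F] {f : E → F} {a M : ℝ}

theorem fderiv_smul (hf : IsPosHomogeneous f a) {l : ℝ} (hl : 0 < l) {x : E} (hx : x ≠ 0) :
    fderiv ℝ f (l • x) = l ^ (a - 1) • fderiv ℝ f x := by
  have hloc : (fun y => f (l • y)) =ᶠ[𝓝 x] l ^ a • f :=
    Filter.eventually_of_mem (isOpen_compl_singleton.mem_nhds hx) fun y hy => hf l hl y hy
  have hchain : l • fderiv ℝ f (l • x) = l ^ a • fderiv ℝ f x := by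
    rw [← fderiv_comp_smul, hloc.fderiv_eq, fderiv_const_smul_field]
    rfl
  rw [Real.rpow_sub_one hl.ne', div_eq_inv_mul, mul_smul, ← hchain, inv_smul_smul₀ hl.ne']

theorem norm_fderiv_le (hf : IsPosHomogeneous f a) (hM : ∀ u : E, ‖u‖ = 1 → ‖fderiv ℝ f u‖ ≤ M)
    {x : E} (hx : x ≠ 0) : ‖fderiv ℝ f x‖ ≤ M * ‖x‖ ^ (a - 1) := by
  have hx' : 0 < ‖x‖ := norm_pos_iff.mpr hx
  have hu : ‖x‖⁻¹ • x ≠ 0 := smul_ne_zero (inv_ne_zero hx'.ne') hx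
  calc ‖fderiv ℝ f x‖ = ‖fderiv ℝ f (‖x‖ • ‖x‖⁻¹ • x)‖ := by rw [smul_inv_smul₀ hx'.ne']
    _ = ‖x‖ ^ (a - 1) * ‖fderiv ℝ f (‖x‖⁻¹ • x)‖ := by
      rw [hf.fderiv_smul hx' hu, norm_smul, Real.norm_of_nonneg (by positivity)]
    _ ≤ ‖x‖ ^ (a - 1) * M := by gcongr; exact hM _ (norm_smul_inv_norm hx)
    _ = M * ‖x‖ ^ (a - 1) := mul_comm _ _

theorem norm_fderiv_le_of_le_sq_norm {q : ℝ} (hf : IsPosHomogeneous f (-q)) (hq : -1 ≤ q)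
    (hM : ∀ u : E, ‖u‖ = 1 → ‖fderiv ℝ f u‖ ≤ M) {x : E} {K : ℝ} (hK : 0 < K)
    (hKx : K ≤ ‖x‖ ^ 2) : ‖fderiv ℝ f x‖ ≤ M * K ^ (-(q + 1) / 2) := by
  have hx : x ≠ 0 := by
    rintro rfl
    simp at hKx
    linarith
  have hM0 : 0 ≤ M := (norm_nonneg _).trans (hM (‖x‖⁻¹ • x) (norm_smul_inv_norm hx))
  calc ‖fderiv ℝ f x‖ ≤ M * ‖x‖ ^ (-q - 1) := hf.norm_fderiv_le hM hx
    _ = M * (‖x‖ ^ 2) ^ (-(q + 1) / 2) := by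
      rw [← Real.rpow_natCast, ← Real.rpow_mul (norm_nonneg x)]
      ring_nf
    _ ≤ M * K ^ (-(q + 1) / 2) := by
      have hexp : -(q + 1) / 2 ≤ 0 := by linarith
      exact mul_le_mul_of_nonneg_left (Real.rpow_le_rpow_of_nonpos hK hKx hexp) hM0

end IsPosHomogeneous

section EuclideanProduct

variable {d : ℕ}

theorem norm_pt (s : ℝ) (w : EuclideanSpace ℝ (Fin d)) : ‖pt s w‖ = √(s ^ 2 + ‖w‖ ^ 2) := by
  simpa [pt, sq_abs] using WithLp.prod_norm_eq_of_L2 (pt s w)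

theorem pt_ne_zero (s : ℝ) {w : EuclideanSpace ℝ (Fin d)} (hw : w ≠ 0) : pt s w ≠ 0 := by
  intro h
  apply hw
  simpa [pt] using congrArg (fun z : EucProd d => (WithLp.equiv 2 _ z).2) h

theorem pt_sub_pt (a b : ℝ) (w : EuclideanSpace ℝ (Fin d)) : pt a w - pt b w = pt (a - b) 0 := by
  apply (WithLp.equiv 2 (ℝ × EuclideanSpace ℝ (Fin d))).injective
  simp [pt]

theorem segment_pt (a b : ℝ) (w : EuclideanSpace ℝ (Fin d)) :
    segment ℝ (pt a w) (pt b w) = (fun s => pt s w) '' segment ℝ a b := by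
  have hline : (fun s => pt s w) = AffineMap.lineMap (k := ℝ) (pt 0 w) (pt 1 w) := by
    funext s
    apply (WithLp.equiv 2 (ℝ × EuclideanSpace ℝ (Fin d))).injective
    simp [pt, AffineMap.lineMap_apply]
  rw [hline, image_segment]
  simp only [← hline]

theorem norm_sub_le_of_norm_fderiv_pt_le {F : Type*} [NormedAddCommGroup F] [NormedSpace ℝ F]
    {f : EucProd d → F} {a b D : ℝ} {w : EuclideanSpace ℝ (Fin d)}
    (hf : ∀ s ∈ segment ℝ a b, DifferentiableAt ℝ f (pt s w))
    (hD : ∀ s ∈ segment ℝ a b, ‖fderiv ℝ f (pt s w)‖ ≤ D) :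
    ‖f (pt b w) - f (pt a w)‖ ≤ D * |b - a| := by
  have hmvt := (convex_segment (pt a w) (pt b w)).norm_image_sub_le_of_norm_fderiv_le
    (by rw [segment_pt]; rintro _ ⟨s, hs, rfl⟩; exact hf s hs)
    (by rw [segment_pt]; rintro _ ⟨s, hs, rfl⟩; exact hD s hs)
    (left_mem_segment ℝ _ _) (right_mem_segment ℝ _ _)
  simpa [pt_sub_pt, norm_pt, Real.sqrt_sq_eq_abs] using hmvt

end EuclideanProduct

theorem sq_add_sq_le_two_mul_one_add_sq_mul (n s R : ℝ) (hR : 1 ≤ R) :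
    n ^ 2 + R ^ 2 ≤ 2 * (1 + (n - s) ^ 2) * (s ^ 2 + R ^ 2) := by
  nlinarith [sq_nonneg (n - 2 * s), mul_nonneg (sq_nonneg (n - s)) (sq_nonneg s),
    mul_nonneg (sq_nonneg (n - s)) (by nlinarith : (0 : ℝ) ≤ R ^ 2 - 1)]

theorem sq_sub_le_of_mem_segment {t n m s : ℝ} (ht : t ∈ Set.Icc (0 : ℝ) 1)
    (hs : s ∈ segment ℝ (t + n) (t + n + m)) : (n - s) ^ 2 ≤ 2 * (1 + m ^ 2) := by
  rw [segment_eq_image'] at hs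
  obtain ⟨θ, ⟨hθ0, hθ1⟩, rfl⟩ := hs
  obtain ⟨ht0, ht1⟩ := ht
  have hθm : (θ * m) ^ 2 ≤ m ^ 2 := by nlinarith [sq_nonneg m, mul_nonneg hθ0 (sq_nonneg m)]
  have ht2 : t ^ 2 ≤ 1 := by nlinarith
  have hshift : n - (t + n + θ • (t + n + m - (t + n))) = -(t + θ * m) := by
    rw [smul_eq_mul]; ring
  rw [hshift, neg_sq]
  nlinarith [sq_nonneg (t - θ * m)]

theorem sq_add_sq_le_mul_of_mem_segment {t n m s R : ℝ} (ht : t ∈ Set.Icc (0 : ℝ) 1)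
    (hR : 1 ≤ R) (hs : s ∈ segment ℝ (t + n) (t + n + m)) :
    n ^ 2 + R ^ 2 ≤ 6 * (1 + m ^ 2) * (s ^ 2 + R ^ 2) := by
  have hpeetre := sq_add_sq_le_two_mul_one_add_sq_mul n s R hR
  have hshift := sq_sub_le_of_mem_segment ht hs
  nlinarith [mul_le_mul_of_nonneg_right hshift (by positivity : (0 : ℝ) ≤ s ^ 2 + R ^ 2)]

theorem rpow_div_mul_sqrt_eq {A B c : ℝ} (q : ℝ) (hA : 0 < A) (hB : 0 < B) (hc : 0 < c) :
    (A / (c * B)) ^ (-(q + 1) / 2) * √B =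
      c ^ ((q + 1) / 2) * B ^ ((q + 2) / 2) * A ^ (-(q + 1) / 2) := by
  rw [neg_div, Real.rpow_neg (by positivity), Real.div_rpow hA.le (by positivity), inv_div,
    Real.mul_rpow hc.le hB.le, Real.rpow_neg hA.le, Real.sqrt_eq_rpow,
    show (q + 2) / 2 = (q + 1) / 2 + 1 / 2 by ring, Real.rpow_add hB]
  field_simp

/-- scalar core of Lemma 3: there is `C > 0`, depending only on `q ≥ 0`,
such that for every `d ≥ 1` and every `f : ℝ × ℝ^d → ℂ` which is `C¹` away from `0` and
positively homogeneous of degree `-q`, with `M` bounding `‖Df‖` on the unit sphere,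
one has `|f(t+n+m, w) − f(t+n, w)| ≤ C M (1+m²)^{(q+2)/2} (n²+R²)^{-(q+1)/2}` for all
`t ∈ [0,1]`, `n, m ∈ ℤ`, `R ≥ 1` and `‖w‖ = R`. -/
theorem homogeneous_symbol_difference_estimate (q : ℝ) (hq : 0 ≤ q) :
    ∃ C : ℝ, 0 < C ∧ ∀ d : ℕ, 1 ≤ d → ∀ f : EucProd d → ℂ,
      ContDiffOn ℝ 1 f {0}ᶜ →
      (∀ l : ℝ, 0 < l → ∀ x : EucProd d, x ≠ 0 → f (l • x) = (l ^ (-q)) • f x) →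
      ∀ M : ℝ, (∀ x : EucProd d, ‖x‖ = 1 → ‖fderiv ℝ f x‖ ≤ M) →
      ∀ t : ℝ, t ∈ Set.Icc (0 : ℝ) 1 → ∀ n m : ℤ, ∀ R : ℝ, 1 ≤ R →
      ∀ w : EuclideanSpace ℝ (Fin d), ‖w‖ = R →
      ‖f (pt (t + n + m) w) - f (pt (t + n) w)‖ ≤
        C * M * (1 + (m : ℝ) ^ 2) ^ ((q + 2) / 2) *
          ((n : ℝ) ^ 2 + R ^ 2) ^ (-(q + 1) / 2) := by
  refine ⟨6 ^ ((q + 1) / 2), by positivity, fun d _ f hf hhom M hM t ht n m R hR w hw => ?_⟩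
  have hM0 : 0 ≤ M := (norm_nonneg _).trans (hM (pt 1 0) (by simp [norm_pt]))
  have hw0 : w ≠ 0 := norm_pos_iff.mp (by linarith)
  set A : ℝ := (n : ℝ) ^ 2 + R ^ 2
  set B : ℝ := 1 + (m : ℝ) ^ 2
  have hbound : ∀ s ∈ segment ℝ (t + n) (t + n + m),
      ‖fderiv ℝ f (pt s w)‖ ≤ M * (A / (6 * B)) ^ (-(q + 1) / 2) := by
    intro s hs
    have hlow : A / (6 * B) ≤ ‖pt s w‖ ^ 2 := by
      rw [div_le_iff₀ (by positivity), norm_pt, Real.sq_sqrt (by positivity), hw, mul_comm]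
      exact sq_add_sq_le_mul_of_mem_segment ht hR hs
    exact IsPosHomogeneous.norm_fderiv_le_of_le_sq_norm hhom (by linarith) hM (by positivity) hlow
  have hdiff : ∀ s ∈ segment ℝ (t + n) (t + n + m), DifferentiableAt ℝ f (pt s w) :=
    fun s _ => (hf.differentiableOn one_ne_zero).differentiableAt
      (isOpen_compl_singleton.mem_nhds (pt_ne_zero s hw0))
  calc ‖f (pt (t + n + m) w) - f (pt (t + n) w)‖
      ≤ M * (A / (6 * B)) ^ (-(q + 1) / 2) * |(m : ℝ)| := by
        simpa using norm_sub_le_of_norm_fderiv_pt_le hdiff hbound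
    _ ≤ M * (A / (6 * B)) ^ (-(q + 1) / 2) * √B := by
        gcongr
        exact Real.abs_le_sqrt (by linarith)
    _ = 6 ^ ((q + 1) / 2) * M * B ^ ((q + 2) / 2) * A ^ (-(q + 1) / 2) := by
        rw [mul_assoc, rpow_div_mul_sqrt_eq q (by positivity) (by positivity) (by norm_num)]
        ring
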